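/- If A is a one-to-one relation (a permutation matrix), then {A' · B : A' has the same row and column sums as A} = {row permutations of B}, i.e., sw(A) · B = rp(B). -/

import Mathlib

/-- Boolean matrix product of {0,1}-valued natural-number matrices. -/
def boolProd {n m k : ℕ} (A : Matrix (Fin n) (Fin m) ℕ) (B : Matrix (Fin m) (Fin k) ℕ) :
    Matrix (Fin n) (Fin k) ℕ :=
  fun i l => if ∃ j, A i j = 1 ∧ B j l = 1 then 1 else 0

/-!
Over `ℕ`, a matrix whose row and column sums are all `1` is a permutation matrix: each row is
a single `1` at some column `f i`, and the column sums force `f` to be injective. So `sw(A)` is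
exactly the set of permutation matrices, and the Boolean product of the permutation matrix of
`σ` with a `0`/`1` matrix `B` is `B` with its rows permuted by `σ`.
-/

open Equiv

section

variable {ι R : Type*} [DecidableEq ι]

theorem Equiv.Perm.permMatrix_apply_eq_ite [Zero R] [One R] (σ : Perm ι) (i j : ι) :
    σ.permMatrix R i j = if j = σ i then 1 else 0 := by
  simp [PEquiv.toMatrix_apply, eq_comm]

variable [Fintype ι]

theorem Fintype.exists_eq_pi_single_of_sum_eq_one {g : ι → ℕ} (h : ∑ i, g i = 1) :
    ∃ j, g = Pi.single j 1 := by
  obtain ⟨j, hj⟩ := (Finsupp.sum_eq_one_iff (Finsupp.equivFunOnFinite.symm g)).mp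
    (by simpa [Finsupp.sum_fintype] using h)
  exact ⟨j, by simpa [Finsupp.single_eq_pi_single] using congrArg DFunLike.coe hj⟩

theorem Equiv.Perm.sum_permMatrix_row [AddCommMonoidWithOne R] (σ : Perm ι) (i : ι) :
    ∑ j, σ.permMatrix R i j = 1 := by
  simp

theorem Equiv.Perm.sum_permMatrix_col [AddCommMonoidWithOne R] (σ : Perm ι) (j : ι) :
    ∑ i, σ.permMatrix R i j = 1 := by
  have h := σ⁻¹.sum_permMatrix_row (R := R) j
  rwa [← Matrix.transpose_permMatrix] at h

theorem Matrix.exists_perm_eq_permMatrix_of_sum_eq_one {M : Matrix ι ι ℕ}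
    (hrow : ∀ i, ∑ j, M i j = 1) (hcol : ∀ j, ∑ i, M i j = 1) :
    ∃ σ : Perm ι, M = σ.permMatrix ℕ := by
  choose f hf using fun i => Fintype.exists_eq_pi_single_of_sum_eq_one (hrow i)
  have hM : ∀ i j, M i j = if j = f i then 1 else 0 := fun i j => by
    rw [hf i, Pi.single_apply]
  have hf_inj : Function.Injective f := by
    intro i i' hii'
    obtain ⟨k, hk⟩ := Fintype.exists_eq_pi_single_of_sum_eq_one (hcol (f i))
    have hki : ∀ l, M l (f i) = 1 → l = k := fun l hl => by
      by_contra hlk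
      simpa [hlk] using (congrFun hk l).symm.trans hl
    rw [hki i (by simp [hM]), hki i' (by simp [hM, hii'])]
  refine ⟨ofBijective f hf_inj.bijective_of_finite, ?_⟩
  ext i j
  rw [hM, Perm.permMatrix_apply_eq_ite, ofBijective_apply]

end

theorem boolProd_permMatrix {n m : ℕ} (σ : Perm (Fin n)) {B : Matrix (Fin n) (Fin m) ℕ}
    (hB : ∀ i j, B i j = 0 ∨ B i j = 1) : boolProd (σ.permMatrix ℕ) B = B.submatrix σ id := by
  ext i l
  have hone : (∃ j, σ.permMatrix ℕ i j = 1 ∧ B j l = 1) ↔ B (σ i) l = 1 := by simp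
  rw [boolProd, Matrix.submatrix_apply, id, if_congr hone rfl rfl]
  rcases hB (σ i) l with h | h <;> simp [h]

theorem sw_perm_mul_eq_row_perms (n m : ℕ)
    (A : Matrix (Fin n) (Fin n) ℕ)
    (hA : ∃ σ : Equiv.Perm (Fin n), ∀ i j, A i j = if j = σ i then 1 else 0)
    (B : Matrix (Fin n) (Fin m) ℕ) (hB : ∀ i j, B i j = 0 ∨ B i j = 1) :
    {C : Matrix (Fin n) (Fin m) ℕ |
        ∃ A' : Matrix (Fin n) (Fin n) ℕ,
          (∀ i j, A' i j = 0 ∨ A' i j = 1) ∧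
          (∀ i, ∑ j, A' i j = ∑ j, A i j) ∧
          (∀ j, ∑ i, A' i j = ∑ i, A i j) ∧
          C = boolProd A' B} =
      {C : Matrix (Fin n) (Fin m) ℕ |
        ∃ σ : Equiv.Perm (Fin n), C = fun i j => B (σ i) j} := by
  obtain ⟨σ, hσ⟩ := hA
  obtain rfl : A = σ.permMatrix ℕ := by
    ext i j
    rw [hσ, Perm.permMatrix_apply_eq_ite]
  ext C
  simp only [Set.mem_ofPred_eq, Perm.sum_permMatrix_row, Perm.sum_permMatrix_col]
  constructor
  · rintro ⟨A', -, hrow, hcol, rfl⟩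
    obtain ⟨τ, rfl⟩ := Matrix.exists_perm_eq_permMatrix_of_sum_eq_one hrow hcol
    exact ⟨τ, boolProd_permMatrix τ hB⟩
  · rintro ⟨τ, rfl⟩
    refine ⟨τ.permMatrix ℕ, fun i j => ?_, τ.sum_permMatrix_row, τ.sum_permMatrix_col,
      (boolProd_permMatrix τ hB).symm⟩
    rw [Perm.permMatrix_apply_eq_ite]
    split_ifs <;> simp
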